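/- arXiv:1806.02526 — 2 statements merged into one kernel-verified Lean document; each statement's English description precedes it below -/
import Mathlib

section
/- Let k be a field, G a group, M an additive commutative group, and let ρ_B : Representation k G B and ρ_W : Representation k G W be linear representations. Suppose (B_u)_{u∈M} is an internal direct sum decomposition of B by subspaces each of which is stable under the G-action on B. Consider the tensor product representation of G on B ⊗_k W. Then the invariants satisfy (B ⊗ W)^G = ⨆_{u∈M} ( T(B_u, W) ⊓ (B ⊗ W)^G ). -/
open TensorProduct DirectSum

/-!
The decomposition `B = ⨁ B_u` induces the decomposition `B ⊗ W = ⨁ T(B_u, W)`, whose pieces are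
`G`-stable. Each `ρ g` preserves the pieces, so it commutes with taking homogeneous components;
hence every component of an invariant tensor is invariant. A submodule closed under taking
components is the sum of its intersections with the pieces.
-/

/-- The image of `P ⊗ Q` in `B ⊗[k] W`: the span of elementary tensors `p ⊗ q`. -/
noncomputable def tensorSpan (k : Type*) [Field k] {B W : Type*} [AddCommGroup B] [Module k B]
    [AddCommGroup W] [Module k W] (P : Submodule k B) (Q : Submodule k W) :
    Submodule k (B ⊗[k] W) :=
  Submodule.map₂ (TensorProduct.mk k B W) P Q

theorem DirectSum.decompose_map_of_mapsTo {ι M σ F : Type*} [DecidableEq ι] [AddCommMonoid M]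
    [SetLike σ M] [AddSubmonoidClass σ M] (ℳ : ι → σ) [Decomposition ℳ] [FunLike F M M]
    [AddMonoidHomClass F M M] (f : F) (hf : ∀ i, ∀ x ∈ ℳ i, f x ∈ ℳ i) (x : M) (i : ι) :
    (decompose ℳ (f x) i : M) = f (decompose ℳ x i) := by
  induction x using Decomposition.inductionOn ℳ with
  | zero => simp
  | @homogeneous j m =>
    by_cases hij : j = i
    · subst hij
      rw [decompose_of_mem_same ℳ (hf j m m.2), decompose_coe, of_eq_same]
    · rw [decompose_of_mem_ne ℳ (hf j m m.2) hij, decompose_of_mem_ne ℳ m.2 hij, map_zero]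
  | add x y hx hy => simp only [map_add, decompose_add, add_apply, AddMemClass.coe_add, hx, hy]

theorem Submodule.eq_iSup_inf_of_isHomogeneous {ι R M : Type*} [DecidableEq ι] [Semiring R]
    [AddCommMonoid M] [Module R M] (ℳ : ι → Submodule R M) [Decomposition ℳ]
    {p : Submodule R M} (hp : SetLike.IsHomogeneous ℳ p) : p = ⨆ i, ℳ i ⊓ p := by
  classical
  refine le_antisymm (fun x hx ↦ ?_) (iSup_le fun _ ↦ inf_le_right)
  rw [← sum_support_decompose ℳ x]
  exact Submodule.sum_mem _ fun i _ ↦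
    Submodule.mem_iSup_of_mem i ⟨(decompose ℳ x i).2, hp i hx⟩

theorem DirectSum.decomposeTensor_eq_map₂ {ι R M : Type*} [CommSemiring R] [AddCommMonoid M]
    [Module R M] (ℳ : ι → Submodule R M) (N : Type*) [AddCommMonoid N] [Module R N] (i : ι) :
    decomposeTensor ℳ N i = Submodule.map₂ (TensorProduct.mk R M N) (ℳ i) ⊤ := by
  rw [decomposeTensor_apply, LinearMap.rTensor, TensorProduct.range_map, Submodule.range_subtype,
    LinearMap.range_id]

theorem Representation.isHomogeneous_invariants {k G V ι : Type*} [CommRing k] [Group G]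
    [AddCommGroup V] [Module k V] [DecidableEq ι] (ρ : Representation k G V)
    (ℳ : ι → Submodule k V) [Decomposition ℳ] (hℳ : ∀ i g, ∀ x ∈ ℳ i, ρ g x ∈ ℳ i) :
    SetLike.IsHomogeneous ℳ ρ.invariants := fun i x hx g ↦ by
  rw [← decompose_map_of_mapsTo ℳ (ρ g) (fun j ↦ hℳ j g), hx g]

theorem TensorProduct.map_mem_map₂_mk {R M N : Type*} [CommSemiring R] [AddCommMonoid M]
    [Module R M] [AddCommMonoid N] [Module R N] {P : Submodule R M} {Q : Submodule R N}
    {f : M →ₗ[R] M} {g : N →ₗ[R] N} (hf : ∀ x ∈ P, f x ∈ P) (hg : ∀ y ∈ Q, g y ∈ Q) {t : M ⊗[R] N}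
    (ht : t ∈ Submodule.map₂ (TensorProduct.mk R M N) P Q) :
    TensorProduct.map f g t ∈ Submodule.map₂ (TensorProduct.mk R M N) P Q := by
  refine (Submodule.map₂_le (r := (Submodule.map₂ _ P Q).comap (TensorProduct.map f g))).2
    (fun x hx y hy ↦ ?_) ht
  exact Submodule.apply_mem_map₂ _ (hf x hx) (hg y hy)

theorem tensor_invariants_eq_iSup_inf_general
    (k : Type*) [Field k] (G : Type*) [Group G]
    (M : Type*)
    (B W : Type*) [AddCommGroup B] [Module k B] [AddCommGroup W] [Module k W]
    (ρB : Representation k G B) (ρW : Representation k G W)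
    (Bfam : M → Submodule k B)
    (hstable : ∀ (u : M) (g : G), ∀ x ∈ Bfam u, ρB g x ∈ Bfam u)
    (hindep : iSupIndep Bfam) (htop : (⨆ u, Bfam u) = ⊤) :
    (ρB.tprod ρW).invariants =
      ⨆ u : M, (tensorSpan k (Bfam u) (⊤ : Submodule k W) ⊓ (ρB.tprod ρW).invariants) := by
  classical
  have := (isInternal_submodule_of_iSupIndep_of_iSup_eq_top hindep htop).chooseDecomposition
  let := tensorDecomposition Bfam W
  have hstable_tensor : ∀ u g, ∀ x ∈ decomposeTensor Bfam W u, (ρB.tprod ρW) g x ∈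
      decomposeTensor Bfam W u := fun u g x hx ↦ by
    rw [decomposeTensor_eq_map₂] at hx ⊢
    exact map_mem_map₂_mk (g := ρW g) (hstable u g) (fun _ _ ↦ Submodule.mem_top) hx
  simp only [tensorSpan, ← decomposeTensor_eq_map₂]
  exact Submodule.eq_iSup_inf_of_isHomogeneous _
    ((ρB.tprod ρW).isHomogeneous_invariants _ hstable_tensor)

/-- If `B = ⨁_{u ∈ M} B_u` is an internal direct-sum decomposition by `G`-stable subspaces,
then the invariants of the tensor product representation on `B ⊗ W` decompose as
`(B ⊗ W)^G = ⨆_u (T(B_u, W) ⊓ (B ⊗ W)^G)`. -/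
theorem tensor_invariants_eq_iSup_inf
    (k : Type*) [Field k] (G : Type*) [Group G]
    (M : Type*) [AddCommGroup M]
    (B W : Type*) [AddCommGroup B] [Module k B] [AddCommGroup W] [Module k W]
    (ρB : Representation k G B) (ρW : Representation k G W)
    (Bfam : M → Submodule k B)
    (hstable : ∀ (u : M) (g : G), ∀ x ∈ Bfam u, ρB g x ∈ Bfam u)
    (hindep : iSupIndep Bfam) (htop : (⨆ u, Bfam u) = ⊤) :
    (ρB.tprod ρW).invariants =
      ⨆ u : M, (tensorSpan k (Bfam u) (⊤ : Submodule k W) ⊓ (ρB.tprod ρW).invariants) :=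
  tensor_invariants_eq_iSup_inf_general k G M B W ρB ρW Bfam hstable hindep htop
end

section
/- Let k be a field, G a group, M an additive commutative group, and let ρ_B : Representation k G B and ρ_W : Representation k G W be linear representations. Suppose (B_u)_{u∈M} is an internal direct sum decomposition of B by subspaces each stable under the G-action on B. Let ρ : M →+ ℤ be an additive homomorphism, i ∈ ℤ, and set B^ρ(i) = ⨆_{u : ρ(u) ≥ i} B_u. Then, for the tensor product representation of G on B ⊗_k W, one has T(B^ρ(i), W) ⊓ (B ⊗ W)^G = ⨆_{u : ρ(u) ≥ i} ( T(B_u, W) ⊓ (B ⊗ W)^G ). -/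
/-!
Tensoring the decomposition `B = ⨁ B_u` with `W` decomposes `B ⊗ W` into the subspaces
`T(B_u, W)`, which are `G`-stable because the `B_u` are. For any direct sum of `G`-stable
subspaces, applying `g` to a decomposition `x = ∑ x_u` of an invariant vector gives another
decomposition of `x`, so by uniqueness each component `x_u` is itself invariant.
-/

open TensorProduct

namespace Representation

variable {k G V : Type*} [CommRing k] [Group G] [AddCommGroup V] [Module k V]

theorem iSup_inf_invariants_of_iSupIndep {ι : Type*} (ρ : Representation k G V)
    {N : ι → Submodule k V} (hN : iSupIndep N) (hstable : ∀ i g, N i ≤ (N i).comap (ρ g)) :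
    (⨆ i, N i) ⊓ ρ.invariants = ⨆ i, (N i ⊓ ρ.invariants) := by
  classical
  refine le_antisymm ?_ (iSup_le fun i => inf_le_inf_right _ (le_iSup N i))
  rintro _ ⟨hx, hinv⟩
  obtain ⟨f, rfl⟩ := (Submodule.mem_iSup_iff_exists_dfinsupp N _).1 hx
  have hcomm : ∀ g, DFinsupp.lsum ℕ (fun i => (N i).subtype) ∘ₗ
      DFinsupp.mapRange.linearMap (fun i => (ρ g).restrict (hstable i g)) =
      ρ g ∘ₗ DFinsupp.lsum ℕ (fun i => (N i).subtype) := by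
    intro g
    ext i y
    simp
  have hf : ∀ i, (f i : V) ∈ ρ.invariants := by
    intro i g
    have hfix : DFinsupp.mapRange.linearMap (fun i => (ρ g).restrict (hstable i g)) f = f :=
      hN.dfinsupp_lsum_injective (by rw [← LinearMap.comp_apply, hcomm]; exact hinv g)
    exact congrArg Subtype.val (DFunLike.congr_fun hfix i)
  rw [DFinsupp.lsum_apply_apply, DFinsupp.sumAddHom_apply]
  exact Submodule.sum_mem _ fun i _ => Submodule.mem_iSup_of_mem i ⟨(f i).2, hf i⟩

end Representation

theorem tensorSpan_top_eq_range_rTensor {k B W : Type*} [Field k] [AddCommGroup B] [Module k B]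
    [AddCommGroup W] [Module k W] (P : Submodule k B) :
    tensorSpan k P (⊤ : Submodule k W) = LinearMap.range (P.subtype.rTensor W) := by
  rw [LinearMap.rTensor, TensorProduct.range_map, P.range_subtype, LinearMap.range_id]
  rfl

theorem iSupIndep_tensorSpan_top {k B W ι : Type*} [Field k] [AddCommGroup B] [Module k B]
    [AddCommGroup W] [Module k W] {N : ι → Submodule k B} (hindep : iSupIndep N)
    (htop : ⨆ i, N i = ⊤) : iSupIndep fun i => tensorSpan k (N i) (⊤ : Submodule k W) := by
  classical
  have := ((DirectSum.isInternal_submodule_iff_iSupIndep_and_iSup_eq_top N).2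
    ⟨hindep, htop⟩).chooseDecomposition
  have := DirectSum.tensorDecomposition N W
  simp_rw [tensorSpan_top_eq_range_rTensor, ← DirectSum.decomposeTensor_apply]
  exact (DirectSum.Decomposition.isInternal _).submodule_iSupIndep

theorem tensorSpan_le_comap_tprod {k G B W : Type*} [Field k] [Monoid G] [AddCommGroup B]
    [Module k B] [AddCommGroup W] [Module k W] (ρB : Representation k G B)
    (ρW : Representation k G W)
    {P : Submodule k B} {Q : Submodule k W} (g : G) (hP : P ≤ P.comap (ρB g))
    (hQ : Q ≤ Q.comap (ρW g)) :
    tensorSpan k P Q ≤ (tensorSpan k P Q).comap (ρB.tprod ρW g) := by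
  refine Submodule.map₂_le.2 fun p hp q hq => ?_
  rw [Submodule.mem_comap, mk_apply, Representation.tprod_apply, map_tmul]
  exact Submodule.apply_mem_map₂ _ (hP hp) (hQ hq)

/-- If `B = ⨁_{u ∈ M} B_u` is an internal direct-sum decomposition by `G`-stable subspaces,
`ρ : M →+ ℤ` and `B^ρ(i) = ⨆_{ρ u ≥ i} B_u`, then for the tensor product representation on
`B ⊗ W` one has `T(B^ρ(i), W) ⊓ (B ⊗ W)^G = ⨆_{ρ u ≥ i} (T(B_u, W) ⊓ (B ⊗ W)^G)`. -/
theorem tensor_invariants_filtration_eq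
    (k : Type*) [Field k] (G : Type*) [Group G]
    (M : Type*) [AddCommGroup M]
    (B W : Type*) [AddCommGroup B] [Module k B] [AddCommGroup W] [Module k W]
    (ρB : Representation k G B) (ρW : Representation k G W)
    (Bfam : M → Submodule k B)
    (hstable : ∀ (u : M) (g : G), ∀ x ∈ Bfam u, ρB g x ∈ Bfam u)
    (hindep : iSupIndep Bfam) (htop : (⨆ u, Bfam u) = ⊤)
    (ρ : M →+ ℤ) (i : ℤ) :
    tensorSpan k (⨆ (u : M) (_ : ρ u ≥ i), Bfam u) (⊤ : Submodule k W) ⊓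
        (ρB.tprod ρW).invariants =
      ⨆ (u : M) (_ : ρ u ≥ i),
        (tensorSpan k (Bfam u) (⊤ : Submodule k W) ⊓ (ρB.tprod ρW).invariants) := by
  let T : {u // ρ u ≥ i} → Submodule k (B ⊗[k] W) := fun u => tensorSpan k (Bfam u) ⊤
  have hT_indep : iSupIndep T :=
    (iSupIndep_tensorSpan_top hindep htop).comp Subtype.val_injective
  have hT_stable : ∀ u g, T u ≤ (T u).comap (ρB.tprod ρW g) := fun u g =>
    tensorSpan_le_comap_tprod ρB ρW g (hstable u g) fun _ _ => trivial
  simp only [tensorSpan, Submodule.map₂_iSup_left]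
  rw [iSup_subtype', iSup_subtype']
  exact (ρB.tprod ρW).iSup_inf_invariants_of_iSupIndep hT_indep hT_stable
end
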